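/- Let B be an m×m matrix with integer entries, and for 1 ≤ l ≤ m set b_l = Σ_{j=1}^{m} B_{lj}·y_j ∈ ℤ[y_1,…,y_m]. Then for every s ∈ ℕ, the operator (1/s!)·[B]^{·s} : P ↦ (1/s!)·Σ_{l_1,…,l_s=1}^{m} b_{l_1}·b_{l_2}⋯b_{l_s}·∂^s P/(∂y_{l_1}⋯∂y_{l_s}) maps the ring ℤ[y_1,…,y_m] into itself. -/
import Mathlib

open MvPolynomial

namespace Stmt16

variable {m : ℕ} {R : Type*} [CommRing R]

noncomputable def DD {s : ℕ} (l : Fin s → Fin m) (P : MvPolynomial (Fin m) R) :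
    MvPolynomial (Fin m) R :=
  (List.ofFn l).foldr (fun a Q => pderiv a Q) P

lemma DD_zero (l : Fin 0 → Fin m) (P : MvPolynomial (Fin m) R) : DD l P = P := by
  simp [DD]

lemma DD_succ {s : ℕ} (l : Fin (s + 1) → Fin m) (P : MvPolynomial (Fin m) R) :
    DD l P = pderiv (l 0) (DD (l ∘ Fin.succ) P) := by
  simp only [DD, List.ofFn_succ, List.foldr_cons]; rfl

lemma DD_add {s : ℕ} (l : Fin s → Fin m) (P Q : MvPolynomial (Fin m) R) :
    DD l (P + Q) = DD l P + DD l Q := by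
  induction s with
  | zero => simp [DD_zero]
  | succ n ih => simp [DD_succ, ih, map_add]

lemma DD_C {s : ℕ} (l : Fin (s + 1) → Fin m) (a : R) :
    DD l (C a : MvPolynomial (Fin m) R) = 0 := by
  induction s with
  | zero => simp [DD_succ, DD_zero]
  | succ n ih => rw [DD_succ, ih]; simp

/-- Iterated Leibniz rule against multiplication by a variable. -/
lemma DD_mul_X {s : ℕ} (l : Fin (s + 1) → Fin m) (P : MvPolynomial (Fin m) R) (i : Fin m) :
    DD l (P * X i) = DD l P * X i +
      ∑ p : Fin (s + 1), (if l p = i then DD (l ∘ p.succAbove) P else 0) := by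
  induction s with
  | zero =>
    rw [DD_succ l (P * X i), DD_zero (l ∘ Fin.succ) (P * X i), pderiv_mul,
      DD_succ l P, DD_zero (l ∘ Fin.succ) P, Fin.sum_univ_one,
      DD_zero (l ∘ (0 : Fin 1).succAbove) P]
    simp only [pderiv_X, Pi.single_apply]
    by_cases h : l 0 = i
    · simp [h]
    · simp [h, Ne.symm h]
  | succ n ih =>
    rw [DD_succ, ih (l ∘ Fin.succ), map_add, map_sum, pderiv_mul]
    simp only [pderiv_X, Pi.single_apply]
    have hsa : (0 : Fin (n+2)).succAbove = Fin.succ := by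
      ext j
      simp [Fin.succAbove]
    have h0 : (if l 0 = i then DD (l ∘ (0 : Fin (n+2)).succAbove) P else 0)
        = DD (l ∘ Fin.succ) P * (if i = l 0 then 1 else 0) := by
      rw [hsa]
      by_cases h : l 0 = i
      · simp [h]
      · simp [h, Ne.symm h]
    have hterm : ∀ p : Fin (n + 1),
        (pderiv (l 0)) (if (l ∘ Fin.succ) p = i then DD ((l ∘ Fin.succ) ∘ p.succAbove) P else 0)
        = (if l p.succ = i then DD (l ∘ p.succ.succAbove) P else 0) := by
      intro p
      have hc : (l ∘ p.succ.succAbove) ∘ Fin.succ = (l ∘ Fin.succ) ∘ p.succAbove := by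
        ext j
        simp [Function.comp, Fin.succ_succAbove_succ]
      have h0' : (l ∘ p.succ.succAbove) 0 = l 0 := by
        simp [Function.comp, Fin.succ_succAbove_zero]
      by_cases h : l p.succ = i
      · rw [if_pos h, if_pos (show (l ∘ Fin.succ) p = i from h)]
        rw [DD_succ (l ∘ p.succ.succAbove) P, hc, h0']
      · rw [if_neg h, if_neg (show ¬ (l ∘ Fin.succ) p = i from h), map_zero]
    rw [Finset.sum_congr rfl (fun p _ => hterm p)]
    rw [DD_succ l P,
      Fin.sum_univ_succ (f := fun p : Fin (n + 2) => if l p = i then DD (l ∘ p.succAbove) P else 0)]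
    rw [h0]
    ring

noncomputable def bb (B : Matrix (Fin m) (Fin m) R) (j : Fin m) : MvPolynomial (Fin m) R :=
  ∑ k, C (B j k) * X k

noncomputable def T (B : Matrix (Fin m) (Fin m) R) (s : ℕ) (P : MvPolynomial (Fin m) R) :
    MvPolynomial (Fin m) R :=
  ∑ l : Fin s → Fin m, (∏ i, bb B (l i)) * DD l P

lemma T_zero (B : Matrix (Fin m) (Fin m) R) (P : MvPolynomial (Fin m) R) : T B 0 P = P := by
  simp [T, DD_zero]

lemma T_C_succ (B : Matrix (Fin m) (Fin m) R) (s : ℕ) (a : R) :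
    T B (s + 1) (C a : MvPolynomial (Fin m) R) = 0 := by
  simp [T, DD_C]

lemma T_add (B : Matrix (Fin m) (Fin m) R) (s : ℕ) (P Q : MvPolynomial (Fin m) R) :
    T B s (P + Q) = T B s P + T B s Q := by
  simp [T, DD_add, mul_add, Finset.sum_add_distrib]

lemma T_mul_X (B : Matrix (Fin m) (Fin m) R) (s : ℕ) (P : MvPolynomial (Fin m) R) (i : Fin m) :
    T B (s + 1) (P * X i) = T B (s + 1) P * X i + (s + 1) • (bb B i * T B s P) := by
  have key : ∀ p : Fin (s + 1),
      (∑ l : Fin (s + 1) → Fin m, (∏ q, bb B (l q)) *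
        (if l p = i then DD (l ∘ p.succAbove) P else 0)) = bb B i * T B s P := by
    intro p
    rw [← Equiv.sum_comp (Fin.insertNthEquiv (fun _ => Fin m) p)
      (fun l => (∏ q, bb B (l q)) * (if l p = i then DD (l ∘ p.succAbove) P else 0))]
    rw [Fintype.sum_prod_type]
    have hterm : ∀ (x : Fin m) (l' : Fin s → Fin m),
        (∏ q, bb B ((Fin.insertNthEquiv (fun _ => Fin m) p) (x, l') q)) *
          (if (Fin.insertNthEquiv (fun _ => Fin m) p) (x, l') p = i
            then DD ((Fin.insertNthEquiv (fun _ => Fin m) p) (x, l') ∘ p.succAbove) P else 0)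
        = if x = i then bb B i * ((∏ q, bb B (l' q)) * DD l' P) else 0 := by
      intro x l'
      have hc : (Fin.insertNthEquiv (fun _ => Fin m) p) (x, l') ∘ p.succAbove = l' := by
        funext q
        simp [Function.comp, Fin.insertNthEquiv_apply, Fin.insertNth_apply_succAbove]
      rw [hc]
      simp only [Fin.insertNthEquiv_apply]
      rw [Fin.prod_univ_succAbove (fun q => bb B (Fin.insertNth (α := fun _ => Fin m) p x l' q)) p]
      simp only [Fin.insertNth_apply_same]
      have hprod : ∀ q : Fin s, bb B (Fin.insertNth (α := fun _ => Fin m) p x l' (p.succAbove q)) = bb B (l' q) := by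
        intro q; rw [Fin.insertNth_apply_succAbove]
      rw [Finset.prod_congr rfl (fun q _ => hprod q)]
      by_cases h : x = i
      · rw [if_pos h, if_pos h, h, mul_assoc]
      · rw [if_neg h, if_neg h, mul_zero]
    rw [Finset.sum_congr rfl (fun x _ => Finset.sum_congr rfl (fun l' _ => hterm x l'))]
    have hx : ∀ x : Fin m,
        (∑ l' : Fin s → Fin m, if x = i then bb B i * ((∏ q, bb B (l' q)) * DD l' P) else 0)
        = if x = i then bb B i * T B s P else 0 := by
      intro x
      by_cases h : x = i
      · simp only [if_pos h, T, Finset.mul_sum]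
      · simp [if_neg h]
    rw [Finset.sum_congr rfl (fun x _ => hx x)]
    rw [Finset.sum_ite_eq' Finset.univ i (fun _ => bb B i * T B s P)]
    simp
  have expand : T B (s + 1) (P * X i) =
      T B (s + 1) P * X i + ∑ p : Fin (s + 1), ∑ l : Fin (s + 1) → Fin m,
        (∏ q, bb B (l q)) * (if l p = i then DD (l ∘ p.succAbove) P else 0) := by
    rw [T]
    rw [Finset.sum_congr rfl (fun l (_ : l ∈ (Finset.univ : Finset (Fin (s+1) → Fin m))) => by
      rw [DD_mul_X l P i, mul_add, Finset.mul_sum])]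
    rw [Finset.sum_add_distrib]
    congr 1
    · rw [T, Finset.sum_mul]
      exact Finset.sum_congr rfl fun l _ => (mul_assoc _ _ _).symm
    · exact Finset.sum_comm
  rw [expand, Finset.sum_congr rfl fun p _ => key p, Finset.sum_const, Finset.card_univ,
    Fintype.card_fin]

noncomputable def psi (B : Matrix (Fin m) (Fin m) R) :
    MvPolynomial (Fin m) R →ₐ[R] Polynomial (MvPolynomial (Fin m) R) :=
  aeval (fun i => Polynomial.C (X i) + Polynomial.X * Polynomial.C (bb B i))

lemma psi_C (B : Matrix (Fin m) (Fin m) R) (a : R) :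
    psi B (C a : MvPolynomial (Fin m) R) = Polynomial.C (C a) := by
  simp [psi]

lemma psi_X (B : Matrix (Fin m) (Fin m) R) (i : Fin m) :
    psi B (X i : MvPolynomial (Fin m) R)
      = Polynomial.C (X i) + Polynomial.X * Polynomial.C (bb B i) := by
  simp [psi]

/-- The key identity: `T B s P` is `s!` times the `s`-th Taylor coefficient. -/
lemma claimM (B : Matrix (Fin m) (Fin m) R) (P : MvPolynomial (Fin m) R) :
    ∀ s : ℕ, T B s P = s.factorial • (psi B P).coeff s := by
  induction P using MvPolynomial.induction_on with
  | C a =>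
    intro s
    rw [psi_C]
    cases s with
    | zero => simp [T_zero, Polynomial.coeff_C]
    | succ n => simp [T_C_succ, Polynomial.coeff_C]
  | add P Q hp hq =>
    intro s
    rw [T_add, hp s, hq s, map_add, Polynomial.coeff_add, smul_add]
  | mul_X P i hp =>
    intro s
    rw [map_mul, psi_X]
    cases s with
    | zero =>
      have h0 := hp 0
      rw [T_zero] at h0
      simp only [Nat.factorial_zero, one_smul] at h0
      rw [T_zero, Polynomial.mul_coeff_zero]
      simp only [Polynomial.coeff_add, Polynomial.coeff_C_zero, Polynomial.mul_coeff_zero,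
        Polynomial.coeff_X_zero, zero_mul, add_zero, Nat.factorial_zero, one_smul]
      rw [← h0]
    | succ n =>
      rw [T_mul_X, hp (n + 1), hp n, mul_add, Polynomial.coeff_add, Polynomial.coeff_mul_C,
        show psi B P * (Polynomial.X * Polynomial.C (bb B i))
          = psi B P * Polynomial.X * Polynomial.C (bb B i) from (mul_assoc _ _ _).symm,
        Polynomial.coeff_mul_C, Polynomial.coeff_mul_X]
      rw [smul_add, smul_mul_assoc, mul_smul_comm, smul_smul]
      rw [Nat.factorial_succ, mul_comm (bb B i) ((psi B P).coeff n)]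

lemma bb_map {S : Type*} [CommRing S] (f : R →+* S) (B : Matrix (Fin m) (Fin m) R) (i : Fin m) :
    MvPolynomial.map f (bb B i) = bb (B.map f) i := by
  simp [bb, map_sum, map_mul, MvPolynomial.map_C, MvPolynomial.map_X, Matrix.map_apply]

lemma psi_map {S : Type*} [CommRing S] (f : R →+* S) (B : Matrix (Fin m) (Fin m) R)
    (Q : MvPolynomial (Fin m) R) :
    Polynomial.map (MvPolynomial.map f) (psi B Q) = psi (B.map f) (MvPolynomial.map f Q) := by
  have h : (Polynomial.mapRingHom (MvPolynomial.map f)).comp (psi B).toRingHom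
      = ((psi (B.map f)).toRingHom.comp (MvPolynomial.map f)) := by
    apply MvPolynomial.ringHom_ext
    · intro r
      simp only [RingHom.comp_apply, AlgHom.toRingHom_eq_coe, RingHom.coe_coe,
        Polynomial.coe_mapRingHom]
      rw [psi_C, MvPolynomial.map_C, psi_C, Polynomial.map_C, MvPolynomial.map_C]
    · intro i
      simp only [RingHom.comp_apply, AlgHom.toRingHom_eq_coe, RingHom.coe_coe,
        Polynomial.coe_mapRingHom]
      rw [psi_X, MvPolynomial.map_X, psi_X]
      simp [Polynomial.map_add, Polynomial.map_mul, Polynomial.map_C, Polynomial.map_X, bb_map]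
  exact RingHom.congr_fun h Q

end Stmt16

open Stmt16 in
/-- for an integer matrix `B`, with `b_l = ∑_j B_{lj} y_j`, the operator
`(1/s!)·[B]^{·s} : P ↦ (1/s!)·∑_{l₁,…,l_s} b_{l₁}⋯b_{l_s}·∂^s P/(∂y_{l₁}⋯∂y_{l_s})`
maps `ℤ[y₁,…,y_m]` into itself. -/
theorem stmt_16 {m : ℕ} (B : Matrix (Fin m) (Fin m) ℤ) (s : ℕ)
    (P : MvPolynomial (Fin m) ℚ)
    (hP : ∀ d : Fin m →₀ ℕ, ∃ z : ℤ, MvPolynomial.coeff d P = (z : ℚ)) :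
    ∀ d : Fin m →₀ ℕ, ∃ z : ℤ,
      MvPolynomial.coeff d
        ((s.factorial : ℚ)⁻¹ • ∑ l : Fin s → Fin m,
          (∏ i, ∑ j, MvPolynomial.C ((B (l i) j : ℚ)) * MvPolynomial.X j) *
            (List.ofFn l).foldr (fun a Q => MvPolynomial.pderiv a Q) P)
      = (z : ℚ) := by
  intro d
  choose z hz using hP
  set κ : ℤ →+* ℚ := Int.castRingHom ℚ with hκ
  set Q : MvPolynomial (Fin m) ℤ := ∑ d' ∈ P.support, MvPolynomial.monomial d' (z d') with hQdef
  have hQ : MvPolynomial.map κ Q = P := by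
    apply MvPolynomial.ext
    intro d'
    rw [MvPolynomial.coeff_map, hQdef, MvPolynomial.coeff_sum]
    simp only [MvPolynomial.coeff_monomial]
    rw [Finset.sum_ite_eq' P.support d' z]
    by_cases h : d' ∈ P.support
    · rw [if_pos h]
      exact (hz d').symm
    · rw [if_neg h, map_zero]
      exact (MvPolynomial.notMem_support_iff.mp h).symm
  have hT : (∑ l : Fin s → Fin m,
      (∏ i, ∑ j, MvPolynomial.C ((B (l i) j : ℚ)) * MvPolynomial.X j) *
        (List.ofFn l).foldr (fun a Q => MvPolynomial.pderiv a Q) P)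
      = T (B.map κ) s P := rfl
  rw [hT, claimM (B.map κ) P s, ← Nat.cast_smul_eq_nsmul ℚ,
    inv_smul_smul₀ (by exact_mod_cast s.factorial_ne_zero)]
  have hsq : psi (B.map κ) P = Polynomial.map (MvPolynomial.map κ) (psi B Q) := by
    rw [← hQ, psi_map]
  rw [hsq, Polynomial.coeff_map, MvPolynomial.coeff_map]
  exact ⟨_, rfl⟩
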